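/- arXiv:2605.20718 — 3 statements merged into one kernel-verified Lean document; each statement's English description precedes it below -/
import Mathlib

section
/- Let d, m be positive integers, let A, D be real d×d matrices, B, F real d×m matrices, Q a real symmetric d×d matrix, N a real symmetric positive definite m×m matrix, I a real m×d matrix, and β ∈ ℝ. Set A_β := A − (β/2)·Id. Let K be a real symmetric positive definite d×d matrix, set S := N + Fᵀ K F, U := I + Bᵀ K + Fᵀ K D, and Θ := −S⁻¹ U (note S is symmetric positive definite, hence invertible). Assume Q − Iᵀ N⁻¹ I is positive definite and K satisfies 0 = Q + K A_β + A_βᵀ K + Dᵀ K D − Uᵀ S⁻¹ U. Then there exists κ > 0 such that (A + BΘ)ᵀ K + K (A + BΘ) + (D + FΘ)ᵀ K (D + FΘ) ⪯ (β − 2κ) K in the Loewner order. -/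
/-!
Write `L` for the closed-loop operator `(A+BΘ)ᵀK + K(A+BΘ) + (D+FΘ)ᵀK(D+FΘ)`. Completing the
square in `Θ` with respect to `S` turns the Riccati equation into
`β K − L = Q + ΘᵀI + IᵀΘ + ΘᵀNΘ`, the square vanishing exactly at `Θ = −S⁻¹U`. Completing the
square once more, now with respect to `N`, gives
`β K − L = (Q − Iᵀ N⁻¹ I) + (Θ + N⁻¹ I)ᵀ N (Θ + N⁻¹ I)`, which is positive definite. In finite
dimensions a positive definite matrix dominates some positive multiple of any symmetric matrix,
here `2κ K`.
-/

open Matrix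

namespace Matrix

section Square

variable {R : Type*} [CommRing R] {n m : Type*} [Fintype m]

lemma completed_square [DecidableEq m] {S : Matrix m m R} (hS : S.IsSymm) (hdet : IsUnit S.det)
    (U Θ : Matrix m n R) :
    Θᵀ * U + Uᵀ * Θ + Θᵀ * S * Θ
      = (Θ + S⁻¹ * U)ᵀ * S * (Θ + S⁻¹ * U) - Uᵀ * S⁻¹ * U := by
  have hSinv : (S⁻¹)ᵀ = S⁻¹ := by rw [transpose_nonsing_inv, hS.eq]
  simp only [transpose_add, transpose_mul, hSinv, Matrix.add_mul, Matrix.mul_add,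
    Matrix.mul_assoc, mul_nonsing_inv_cancel_left S _ hdet, nonsing_inv_mul_cancel_left S _ hdet]
  abel

lemma closedLoop_add_feedbackCost [Fintype n] {A D K Q : Matrix n n R} {B F : Matrix n m R}
    {N S : Matrix m m R} {I U : Matrix m n R} (hK : K.IsSymm)
    (hS : S = N + Fᵀ * K * F) (hU : U = I + Bᵀ * K + Fᵀ * K * D) (Θ : Matrix m n R) :
    (A + B * Θ)ᵀ * K + K * (A + B * Θ) + (D + F * Θ)ᵀ * K * (D + F * Θ)
        + (Q + (Θᵀ * I + Iᵀ * Θ + Θᵀ * N * Θ))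
      = Q + K * A + Aᵀ * K + Dᵀ * K * D + (Θᵀ * U + Uᵀ * Θ + Θᵀ * S * Θ) := by
  subst hS hU
  simp only [transpose_add, transpose_mul, transpose_transpose, hK.eq, Matrix.add_mul,
    Matrix.mul_add, Matrix.mul_assoc]
  abel

end Square

lemma PosSemidef.transpose_mul_mul_same {R : Type*} [Ring R] [PartialOrder R] [StarRing R]
    [TrivialStar R] {n m : Type*} [Fintype n] [Fintype m] {A : Matrix n n R}
    (hA : A.PosSemidef) (B : Matrix n m R) : (Bᵀ * A * B).PosSemidef := by
  simpa only [conjTranspose_eq_transpose_of_trivial] using hA.conjTranspose_mul_mul_same B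

section LoewnerOrder

open scoped MatrixOrder ComplexOrder

variable {𝕜 n : Type*} [RCLike 𝕜] [Fintype n] [DecidableEq n]

lemma IsHermitian.exists_le_smul_one {K : Matrix n n 𝕜} (hK : K.IsHermitian) :
    ∃ R : ℝ, K ≤ R • (1 : Matrix n n 𝕜) := by
  obtain ⟨R, hR⟩ := K.finite_real_spectrum.bddAbove
  exact ⟨R, Algebra.algebraMap_eq_smul_one (A := Matrix n n 𝕜) R ▸
    le_algebraMap_of_spectrum_le (fun x hx => hR hx) hK⟩

lemma PosDef.exists_pos_smul_one_le {P : Matrix n n 𝕜} (hP : P.PosDef) :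
    ∃ r : ℝ, 0 < r ∧ r • (1 : Matrix n n 𝕜) ≤ P := by
  suffices ∃ r : ℝ, 0 < r ∧ ∀ x ∈ spectrum ℝ P, r ≤ x by
    obtain ⟨r, hr, hrP⟩ := this
    exact ⟨r, hr, Algebra.algebraMap_eq_smul_one (A := Matrix n n 𝕜) r ▸
      algebraMap_le_of_le_spectrum hrP hP.isHermitian⟩
  obtain hempty | hne := (spectrum ℝ P).eq_empty_or_nonempty
  · exact ⟨1, one_pos, by simp [hempty]⟩
  · obtain ⟨r, hr, hmin⟩ := Set.exists_min_image _ id P.finite_real_spectrum hne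
    exact ⟨r, (isStrictlyPositive_iff_posDef.mpr hP).spectrum_pos hr, hmin⟩

lemma PosDef.exists_pos_smul_le {P K : Matrix n n 𝕜} (hP : P.PosDef) (hK : K.IsHermitian) :
    ∃ c : ℝ, 0 < c ∧ c • K ≤ P := by
  obtain ⟨r, hr, hrP⟩ := hP.exists_pos_smul_one_le
  obtain ⟨R, hKR⟩ := hK.exists_le_smul_one
  have hR : 0 < max R 1 := lt_max_of_lt_right one_pos
  refine ⟨r / max R 1, by positivity, ?_⟩
  calc (r / max R 1) • K ≤ (r / max R 1) • max R 1 • (1 : Matrix n n 𝕜) := by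
        gcongr
        exact hKR.trans (smul_le_smul_of_nonneg_right (le_max_left R 1) zero_le_one)
    _ = r • 1 := by rw [smul_smul, div_mul_cancel₀ r hR.ne']
    _ ≤ P := hrP

end LoewnerOrder

end Matrix

theorem closed_loop_lyapunov_inequality_general
    (d m : ℕ)
    (A D : Matrix (Fin d) (Fin d) ℝ)
    (B F : Matrix (Fin d) (Fin m) ℝ)
    (Q : Matrix (Fin d) (Fin d) ℝ)
    (N : Matrix (Fin m) (Fin m) ℝ) (hN : N.PosDef)
    (I : Matrix (Fin m) (Fin d) ℝ)
    (β : ℝ)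
    (Aβ : Matrix (Fin d) (Fin d) ℝ) (hAβ : Aβ = A - (β / 2) • (1 : Matrix (Fin d) (Fin d) ℝ))
    (K : Matrix (Fin d) (Fin d) ℝ) (hK : K.PosDef)
    (S : Matrix (Fin m) (Fin m) ℝ) (hS : S = N + Fᵀ * K * F)
    (U : Matrix (Fin m) (Fin d) ℝ) (hU : U = I + Bᵀ * K + Fᵀ * K * D)
    (Θ : Matrix (Fin m) (Fin d) ℝ) (hΘ : Θ = -(S⁻¹ * U))
    (hH1 : (Q - Iᵀ * N⁻¹ * I).PosDef)
    (hRiccati : 0 = Q + K * Aβ + Aβᵀ * K + Dᵀ * K * D - Uᵀ * S⁻¹ * U) :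
    ∃ κ : ℝ, 0 < κ ∧
      ((β - 2 * κ) • K
        - ((A + B * Θ)ᵀ * K + K * (A + B * Θ) + (D + F * Θ)ᵀ * K * (D + F * Θ))).PosSemidef := by
  have hKs : K.IsSymm := isHermitian_iff_isSymm.mp hK.isHermitian
  have hSpd : S.PosDef := hS ▸ hN.add_posSemidef (hK.posSemidef.transpose_mul_mul_same F)
  have hRic : Q + K * A + Aᵀ * K + Dᵀ * K * D - Uᵀ * S⁻¹ * U = β • K := by
    subst hAβ
    rw [← sub_eq_zero, hRiccati]
    simp only [transpose_sub, transpose_smul, transpose_one, Matrix.mul_sub, Matrix.sub_mul,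
      Matrix.mul_smul, Matrix.smul_mul, Matrix.mul_one, Matrix.one_mul]
    module
  have hopt : Θᵀ * U + Uᵀ * Θ + Θᵀ * S * Θ = -(Uᵀ * S⁻¹ * U) := by
    rw [completed_square (isHermitian_iff_isSymm.mp hSpd.isHermitian) hSpd.det_pos.ne'.isUnit,
      hΘ, neg_add_cancel, transpose_zero, Matrix.zero_mul, Matrix.zero_mul, zero_sub]
  have hgap := closedLoop_add_feedbackCost (A := A) (Q := Q) (N := N) hKs hS hU Θ
  rw [hopt, ← sub_eq_add_neg, hRic,
    completed_square (isHermitian_iff_isSymm.mp hN.isHermitian) hN.det_pos.ne'.isUnit] at hgap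
  obtain ⟨c, hc, hcK⟩ := (hH1.add_posSemidef
    (hN.posSemidef.transpose_mul_mul_same (Θ + N⁻¹ * I))).exists_pos_smul_le hK.isHermitian
  refine ⟨c / 2, by positivity, ?_⟩
  rw [show (β - 2 * (c / 2)) • K = β • K - c • K by module, ← hgap, sub_right_comm,
    add_sub_cancel_left, ← add_sub_assoc, ← sub_add_eq_add_sub]
  -- the Loewner order `c • K ≤ P` is by definition `(P - c • K).PosSemidef`
  exact hcK

/-- Closed-loop Lyapunov inequality: under the Riccati equation for `K` and
positive definiteness of `Q − Iᵀ N⁻¹ I`, the closed-loop generator with feedback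
`Θ = −S⁻¹ U` satisfies `(A+BΘ)ᵀK + K(A+BΘ) + (D+FΘ)ᵀK(D+FΘ) ⪯ (β − 2κ)K`
for some `κ > 0`. -/
theorem closed_loop_lyapunov_inequality
    (d m : ℕ) (hd : 0 < d) (hm : 0 < m)
    (A D : Matrix (Fin d) (Fin d) ℝ)
    (B F : Matrix (Fin d) (Fin m) ℝ)
    (Q : Matrix (Fin d) (Fin d) ℝ) (hQ : Q.IsSymm)
    (N : Matrix (Fin m) (Fin m) ℝ) (hN : N.PosDef)
    (I : Matrix (Fin m) (Fin d) ℝ)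
    (β : ℝ)
    (Aβ : Matrix (Fin d) (Fin d) ℝ) (hAβ : Aβ = A - (β / 2) • (1 : Matrix (Fin d) (Fin d) ℝ))
    (K : Matrix (Fin d) (Fin d) ℝ) (hK : K.PosDef)
    (S : Matrix (Fin m) (Fin m) ℝ) (hS : S = N + Fᵀ * K * F)
    (U : Matrix (Fin m) (Fin d) ℝ) (hU : U = I + Bᵀ * K + Fᵀ * K * D)
    (Θ : Matrix (Fin m) (Fin d) ℝ) (hΘ : Θ = -(S⁻¹ * U))
    (hH1 : (Q - Iᵀ * N⁻¹ * I).PosDef)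
    (hRiccati : 0 = Q + K * Aβ + Aβᵀ * K + Dᵀ * K * D - Uᵀ * S⁻¹ * U) :
    ∃ κ : ℝ, 0 < κ ∧
      ((β - 2 * κ) • K
        - ((A + B * Θ)ᵀ * K + K * (A + B * Θ) + (D + F * Θ)ᵀ * K * (D + F * Θ))).PosSemidef :=
  closed_loop_lyapunov_inequality_general d m A D B F Q N hN I β Aβ hAβ K hK S hS U hU Θ hΘ hH1
    hRiccati
end

section
/- Let d be a positive integer, let Σ and Σ' be real symmetric positive semidefinite d×d matrices, and let δ ∈ [0, 1). Suppose that (1 − δ)Σ ⪯ Σ' ⪯ (1 + δ)Σ in the Loewner order. Then the positive semidefinite square roots satisfy ‖(Σ')^{1/2} − Σ^{1/2}‖ ≤ δ ‖Σ^{1/2}‖, where ‖·‖ is the spectral (ℓ²-operator) norm. -/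
open Matrix
open scoped Matrix.Norms.L2Operator

/-- The positive semidefinite square root, as defined in Mathlib of December 2024
(`Matrix.PosSemidef.sqrt`, since removed). -/
noncomputable def Matrix.PosSemidef.sqrt {n : Type*} [Fintype n] [DecidableEq n] {𝕜 : Type*}
    [RCLike 𝕜] [PartialOrder 𝕜] {A : Matrix n n 𝕜} (hA : A.PosSemidef) : Matrix n n 𝕜 :=
  hA.1.eigenvectorUnitary.1 * diagonal ((↑) ∘ (√·) ∘ hA.1.eigenvalues) *
    (star hA.1.eigenvectorUnitary : Matrix n n 𝕜)

/-!
The square root is operator monotone on positive semidefinite matrices, so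
`(1 - δ)Σ ⪯ Σ' ⪯ (1 + δ)Σ` gives `√(1 - δ) Σ^{1/2} ⪯ Σ'^{1/2} ⪯ √(1 + δ) Σ^{1/2}`; with
`1 - δ ≤ √(1 - δ)` and `√(1 + δ) ≤ 1 + δ` this becomes `-δ Σ^{1/2} ⪯ Σ'^{1/2} - Σ^{1/2} ⪯ δ Σ^{1/2}`.
As the operator norm of a self-adjoint `T` is the supremum of `|⟪x, T x⟫| / ‖x‖²`,
`-P ⪯ T ⪯ P` implies `‖T‖ ≤ ‖P‖`.
-/

namespace ContinuousLinearMap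

variable {𝕜 E : Type*} [RCLike 𝕜] [NormedAddCommGroup E] [InnerProductSpace 𝕜 E]

theorem rayleighQuotient_mono {T S : E →L[𝕜] E} (h : T ≤ S) (x : E) :
    T.rayleighQuotient x ≤ S.rayleighQuotient x := by
  have hpos : 0 ≤ (S - T).rayleighQuotient x := div_nonneg (h.2 x) (by positivity)
  have hsum := (S - T).rayleighQuotient_add T (x := x)
  rw [sub_add_cancel] at hsum
  linarith

theorem norm_le_norm_of_neg_le_of_le {T S : E →L[𝕜] E} (h₁ : -S ≤ T) (h₂ : T ≤ S) :
    ‖T‖ ≤ ‖S‖ := by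
  -- `2 T = (T + S) - (S - T)` is a difference of positive, hence symmetric, operators.
  have hT : (T : E →ₗ[𝕜] E).IsSymmetric := fun x y => by
    have h₁x := h₁.1 x y
    have h₂x := h₂.1 x y
    simp only [coe_coe, _root_.sub_apply, _root_.neg_apply, inner_sub_left, inner_sub_right,
      inner_neg_left, inner_neg_right] at h₁x h₂x ⊢
    linear_combination (h₁x - h₂x) / 2
  rw [T.norm_eq_iSup_rayleighQuotient hT]
  refine ciSup_le fun x => ?_
  have hlow := rayleighQuotient_mono h₁ x
  rw [rayleighQuotient_neg_apply] at hlow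
  calc |T.rayleighQuotient x| ≤ S.rayleighQuotient x :=
        abs_le.2 ⟨hlow, rayleighQuotient_mono h₂ x⟩
    _ ≤ ‖S‖ := (le_abs_self _).trans (S.rayleighQuotient_le_norm x)

end ContinuousLinearMap

namespace Matrix

open scoped MatrixOrder ComplexOrder

variable {𝕜 n : Type*} [RCLike 𝕜] [Fintype n]

theorem IsHermitian.star_dotProduct_mulVec {M : Matrix n n 𝕜} (hM : M.IsHermitian)
    (v w : n → 𝕜) : star v ⬝ᵥ M *ᵥ w = star (M *ᵥ v) ⬝ᵥ w := by
  rw [star_mulVec, hM.eq, dotProduct_mulVec]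

variable [DecidableEq n]

/-- If `v` is a unit eigenvector of `B - A` for an eigenvalue `μ < 0`, then `A v = B v - μ v`
gives `⟪v, (B * B - A * A) v⟫ = μ (2 ⟪v, B v⟫ - μ) < 0`. -/
theorem le_of_mul_self_le_mul_self {A B : Matrix n n 𝕜} (hA : A.IsHermitian) (hB : 0 ≤ B)
    (h : A * A ≤ B * B) : A ≤ B := by
  have hB' := hB.posSemidef
  have hC : (B - A).IsHermitian := hB'.1.sub hA
  rw [le_iff, hC.posSemidef_iff_eigenvalues_nonneg]
  intro i
  by_contra! hμ
  set μ := hC.eigenvalues i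
  change μ < 0 at hμ
  set v := (hC.eigenvectorBasis i).ofLp
  have hAv : A *ᵥ v = B *ᵥ v - (μ : 𝕜) • v := by
    rw [← RCLike.real_smul_eq_coe_smul, ← hC.mulVec_eigenvectorBasis i, sub_mulVec]
    abel
  have hvv : star v ⬝ᵥ v = 1 := by
    rw [dotProduct_comm, ← EuclideanSpace.inner_eq_star_dotProduct, inner_self_eq_norm_sq_to_K,
      (hC.eigenvectorBasis).orthonormal.1 i]
    simp
  have key : star v ⬝ᵥ (B * B - A * A) *ᵥ v = μ * (2 * (star v ⬝ᵥ B *ᵥ v) - μ) := by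
    rw [sub_mulVec, dotProduct_sub, ← mulVec_mulVec, ← mulVec_mulVec,
      hB'.1.star_dotProduct_mulVec, hA.star_dotProduct_mulVec, hAv]
    simp only [star_sub, star_smul, RCLike.star_def, RCLike.conj_ofReal, sub_dotProduct,
      dotProduct_sub, smul_dotProduct, dotProduct_smul, hvv, smul_eq_mul,
      ← hB'.1.star_dotProduct_mulVec v v]
    ring
  have hq := (RCLike.nonneg_iff.1 (hB'.dotProduct_mulVec_nonneg v)).1
  have hkey := (RCLike.nonneg_iff.1 (h.dotProduct_mulVec_nonneg v)).1
  rw [key] at hkey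
  simp only [RCLike.mul_re, RCLike.ofReal_re, RCLike.ofReal_im, map_sub, RCLike.ofNat_re,
    RCLike.ofNat_im, zero_mul, sub_zero] at hkey
  nlinarith

theorem toEuclideanCLM_mono : Monotone (toEuclideanCLM (𝕜 := 𝕜) (n := n)) := fun A B h => by
  rw [ContinuousLinearMap.le_def, ← map_sub]
  exact isPositive_toEuclideanLin_iff.2 h

theorem l2_opNorm_le_of_neg_le_of_le {A M : Matrix n n 𝕜} (h₁ : -A ≤ M) (h₂ : M ≤ A) :
    ‖M‖ ≤ ‖A‖ := by
  have h₁' := toEuclideanCLM_mono (𝕜 := 𝕜) h₁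
  rw [map_neg] at h₁'
  exact ContinuousLinearMap.norm_le_norm_of_neg_le_of_le h₁' (toEuclideanCLM_mono h₂)

theorem PosSemidef.sqrt_eq_cfcSqrt {A : Matrix n n 𝕜} (hA : A.PosSemidef) :
    hA.sqrt = CFC.sqrt A := by
  rw [CFC.sqrt_eq_real_sqrt A hA.nonneg, cfcₙ_eq_cfc, hA.1.cfc_eq, IsHermitian.cfc,
    Unitary.conjStarAlgAut_apply]
  rfl

theorem cfcSqrt_le_cfcSqrt {A B : Matrix n n 𝕜} (hA : 0 ≤ A) (h : A ≤ B) :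
    CFC.sqrt A ≤ CFC.sqrt B :=
  le_of_mul_self_le_mul_self (CFC.sqrt_nonneg A).posSemidef.1 (CFC.sqrt_nonneg B)
    (by rwa [CFC.sqrt_mul_sqrt_self A, CFC.sqrt_mul_sqrt_self B (hA.trans h)])

theorem cfcSqrt_smul {A : Matrix n n 𝕜} (hA : 0 ≤ A) {c : ℝ} (hc : 0 ≤ c) :
    CFC.sqrt (c • A) = √c • CFC.sqrt A :=
  (CFC.sqrt_eq_iff _ _ (smul_nonneg hc hA)
    (smul_nonneg (Real.sqrt_nonneg c) (CFC.sqrt_nonneg A))).2 <| by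
    rw [smul_mul_smul_comm, Real.mul_self_sqrt hc, CFC.sqrt_mul_sqrt_self A]

theorem cfcSqrt_sub_cfcSqrt_le_of_le_smul {A B : Matrix n n 𝕜} (hA : 0 ≤ A) (hB : 0 ≤ B) {c : ℝ}
    (hc : 1 ≤ c) (h : B ≤ c • A) : CFC.sqrt B - CFC.sqrt A ≤ (c - 1) • CFC.sqrt A := by
  have hsqrt : CFC.sqrt B ≤ √c • CFC.sqrt A :=
    cfcSqrt_smul hA (by linarith) ▸ cfcSqrt_le_cfcSqrt hB h
  calc CFC.sqrt B - CFC.sqrt A ≤ (√c - 1) • CFC.sqrt A := by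
        rw [sub_smul, one_smul]; exact sub_le_sub_right hsqrt _
    _ ≤ (c - 1) • CFC.sqrt A :=
        smul_le_smul_of_nonneg_right (by linarith [Real.sqrt_le_self_iff.2 (Or.inr hc)])
          (CFC.sqrt_nonneg A)

theorem smul_cfcSqrt_le_cfcSqrt_sub_of_smul_le {A B : Matrix n n 𝕜} (hA : 0 ≤ A) {c : ℝ}
    (hc₀ : 0 ≤ c) (hc₁ : c ≤ 1) (h : c • A ≤ B) :
    (c - 1) • CFC.sqrt A ≤ CFC.sqrt B - CFC.sqrt A := by
  have hsqrt : √c • CFC.sqrt A ≤ CFC.sqrt B :=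
    cfcSqrt_smul hA hc₀ ▸ cfcSqrt_le_cfcSqrt (smul_nonneg hc₀ hA) h
  calc (c - 1) • CFC.sqrt A ≤ (√c - 1) • CFC.sqrt A :=
        smul_le_smul_of_nonneg_right (by linarith [Real.le_sqrt_self_iff.2 hc₁])
          (CFC.sqrt_nonneg A)
    _ ≤ CFC.sqrt B - CFC.sqrt A := by rw [sub_smul, one_smul]; exact sub_le_sub_right hsqrt _

theorem norm_cfcSqrt_sub_cfcSqrt_le {A B : Matrix n n 𝕜} (hA : 0 ≤ A) {δ : ℝ} (hδ₀ : 0 ≤ δ)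
    (hδ₁ : δ ≤ 1) (hlow : (1 - δ) • A ≤ B) (hhigh : B ≤ (1 + δ) • A) :
    ‖CFC.sqrt B - CFC.sqrt A‖ ≤ δ * ‖CFC.sqrt A‖ := by
  have hB : 0 ≤ B := (smul_nonneg (by linarith) hA).trans hlow
  have h₁ := smul_cfcSqrt_le_cfcSqrt_sub_of_smul_le hA (by linarith) (by linarith) hlow
  have h₂ := cfcSqrt_sub_cfcSqrt_le_of_le_smul hA hB (by linarith) hhigh
  rw [sub_sub_cancel_left, neg_smul] at h₁
  rw [add_sub_cancel_left] at h₂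
  calc ‖CFC.sqrt B - CFC.sqrt A‖ ≤ ‖δ • CFC.sqrt A‖ := l2_opNorm_le_of_neg_le_of_le h₁ h₂
    _ = δ * ‖CFC.sqrt A‖ := by
      rw [RCLike.real_smul_eq_coe_smul (K := 𝕜), norm_smul, RCLike.norm_ofReal, abs_of_nonneg hδ₀]

end Matrix

theorem sqrt_spectral_norm_stability_general
    (d : ℕ)
    (Sig1 Sig2 : Matrix (Fin d) (Fin d) ℝ)
    (hSig1 : Sig1.PosSemidef) (hSig2 : Sig2.PosSemidef)
    (δ : ℝ) (hδ0 : 0 ≤ δ) (hδ1 : δ < 1)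
    (hlow : (Sig2 - (1 - δ) • Sig1).PosSemidef)
    (hhigh : ((1 + δ) • Sig1 - Sig2).PosSemidef) :
    ‖hSig2.sqrt - hSig1.sqrt‖ ≤ δ * ‖hSig1.sqrt‖ := by
  rw [hSig1.sqrt_eq_cfcSqrt, hSig2.sqrt_eq_cfcSqrt]
  exact norm_cfcSqrt_sub_cfcSqrt_le hSig1.nonneg hδ0 hδ1.le hlow hhigh

/-- Spectral-norm stability of the positive semidefinite square root under a
Loewner sandwich: if `(1−δ)Σ ⪯ Σ' ⪯ (1+δ)Σ` with `δ ∈ [0,1)`, then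
`‖(Σ')^{1/2} − Σ^{1/2}‖ ≤ δ ‖Σ^{1/2}‖` in the ℓ²-operator norm. -/
theorem sqrt_spectral_norm_stability
    (d : ℕ) (hd : 0 < d)
    (Sig1 Sig2 : Matrix (Fin d) (Fin d) ℝ)
    (hSig1 : Sig1.PosSemidef) (hSig2 : Sig2.PosSemidef)
    (δ : ℝ) (hδ0 : 0 ≤ δ) (hδ1 : δ < 1)
    (hlow : (Sig2 - (1 - δ) • Sig1).PosSemidef)
    (hhigh : ((1 + δ) • Sig1 - Sig2).PosSemidef) :
    ‖hSig2.sqrt - hSig1.sqrt‖ ≤ δ * ‖hSig1.sqrt‖ :=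
  sqrt_spectral_norm_stability_general d Sig1 Sig2 hSig1 hSig2 δ hδ0 hδ1 hlow hhigh
end

section
/- Let m be a positive integer, let S be a real symmetric positive definite m×m matrix, λ > 0 and η ∈ ℝ^m, and set g := g_{S,λ,S⁻¹η}, i.e., g(a) = (det S)^{1/2}(πλ)^{−m/2} exp(−(1/λ)(a + S⁻¹η)ᵀ S (a + S⁻¹η)). Let p : ℝ^m → [0,∞) be a measurable probability density with respect to Lebesgue measure (∫ p = 1) such that ∫ ‖a‖² p(a) da < ∞ and ∫ p(a) |log p(a)| da < ∞ (with the convention 0·log 0 = 0). Then ∫_{ℝ^m} (aᵀ S a + 2 aᵀ η + λ log p(a)) p(a) da = −ηᵀ S⁻¹ η − (λ/2)(m·log(πλ) − log det S) + λ ∫_{ℝ^m} p(a) log(p(a)/g(a)) da. -/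
/-!
Completing the square, `λ log g(a) = −(aᵀSa + 2aᵀη) − ηᵀS⁻¹η − (λ/2)(m log(πλ) − log det S)`,
so the integrand on the left is, pointwise, `λ p log(p/g)` plus a constant multiple of `p`
(both sides vanish where `p = 0`). Integrating against `∫ p = 1` gives the identity. The moment
and entropy hypotheses make the left integrand integrable, through the bounds
`|aᵀAa| ≤ (∑ |A i j|) aᵀa` and `2|aᵀη| ≤ aᵀa + ηᵀη`.
-/

open Matrix MeasureTheory

/-- The Gaussian density `g_{S,λ,v}(a) = (det S)^{1/2} (πλ)^{−m/2}
exp(−(1/λ)(a+v)ᵀ S (a+v))`. -/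
noncomputable def gaussDensity {m : ℕ} (S : Matrix (Fin m) (Fin m) ℝ) (lam : ℝ)
    (v : Fin m → ℝ) (a : Fin m → ℝ) : ℝ :=
  Real.sqrt S.det * (Real.pi * lam) ^ (-(m : ℝ) / 2)
    * Real.exp (-(1 / lam) * ((a + v) ⬝ᵥ (S *ᵥ (a + v))))

section Symmetric

variable {n R : Type*} [Fintype n] [CommRing R]

theorem add_dotProduct_mulVec_add_of_isSymm {A : Matrix n n R} (hA : A.IsSymm) (x y : n → R) :
    (x + y) ⬝ᵥ (A *ᵥ (x + y))
      = x ⬝ᵥ (A *ᵥ x) + 2 * (x ⬝ᵥ (A *ᵥ y)) + y ⬝ᵥ (A *ᵥ y) := by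
  have hswap : y ⬝ᵥ (A *ᵥ x) = x ⬝ᵥ (A *ᵥ y) := by
    rw [dotProduct_mulVec, ← mulVec_transpose, hA.eq, dotProduct_comm]
  rw [mulVec_add, add_dotProduct, dotProduct_add, dotProduct_add, hswap]
  ring

end Symmetric

section DotProduct

variable {n R : Type*} [Fintype n] [CommRing R] [LinearOrder R] [IsStrictOrderedRing R]

theorem dotProduct_self_nonneg (x : n → R) : 0 ≤ x ⬝ᵥ x :=
  Finset.sum_nonneg fun i _ => mul_self_nonneg (x i)

theorem two_mul_abs_dotProduct_le (x y : n → R) : 2 * |x ⬝ᵥ y| ≤ x ⬝ᵥ x + y ⬝ᵥ y := by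
  have h₁ := dotProduct_self_nonneg (x - y)
  have h₂ := dotProduct_self_nonneg (x + y)
  simp only [sub_dotProduct, dotProduct_sub, add_dotProduct, dotProduct_add,
    dotProduct_comm y x] at h₁ h₂
  cases abs_cases (x ⬝ᵥ y) <;> linarith

theorem abs_mul_le_dotProduct_self (x : n → R) (i j : n) : |x i * x j| ≤ x ⬝ᵥ x := by
  have hi : x i * x i ≤ x ⬝ᵥ x :=
    Finset.single_le_sum (fun k _ => mul_self_nonneg (x k)) (Finset.mem_univ i)
  have hj : x j * x j ≤ x ⬝ᵥ x :=
    Finset.single_le_sum (fun k _ => mul_self_nonneg (x k)) (Finset.mem_univ j)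
  rw [abs_mul]
  nlinarith [abs_mul_abs_self (x i), abs_mul_abs_self (x j), two_mul_le_add_sq |x i| |x j|]

theorem abs_dotProduct_mulVec_self_le (A : Matrix n n R) (x : n → R) :
    |x ⬝ᵥ (A *ᵥ x)| ≤ (∑ i, ∑ j, |A i j|) * (x ⬝ᵥ x) := by
  have hexpand : x ⬝ᵥ (A *ᵥ x) = ∑ i, ∑ j, A i j * (x i * x j) := by
    simp only [dotProduct, mulVec, Finset.mul_sum]
    refine Finset.sum_congr rfl fun i _ => Finset.sum_congr rfl fun j _ => by ring
  calc |x ⬝ᵥ (A *ᵥ x)| ≤ ∑ i, ∑ j, |A i j| * |x i * x j| := by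
        rw [hexpand]
        refine (Finset.abs_sum_le_sum_abs _ _).trans (Finset.sum_le_sum fun i _ => ?_)
        simpa only [abs_mul] using Finset.abs_sum_le_sum_abs (fun j => A i j * (x i * x j)) _
    _ ≤ ∑ i, ∑ j, |A i j| * (x ⬝ᵥ x) := by
        gcongr with i _ j _
        exact abs_mul_le_dotProduct_self x i j
    _ = (∑ i, ∑ j, |A i j|) * (x ⬝ᵥ x) := by simp only [Finset.sum_mul]

end DotProduct

section Integrability

theorem MeasureTheory.Integrable.mul_log_of_mul_abs_log {α : Type*} [MeasurableSpace α]
    {μ : Measure α} {p : α → ℝ} (hp : AEMeasurable p μ)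
    (h : Integrable (fun a => p a * |Real.log (p a)|) μ) :
    Integrable (fun a => p a * Real.log (p a)) μ :=
  h.mono (hp.mul (Real.measurable_log.comp_aemeasurable hp)).aestronglyMeasurable
    (ae_of_all _ fun a => by simp)

variable {n : Type*} [Fintype n] {μ : Measure (n → ℝ)} {p : (n → ℝ) → ℝ}

theorem integrable_dotProduct_mulVec_self_mul (A : Matrix n n ℝ) (hp : AEMeasurable p μ)
    (h2 : Integrable (fun a => (a ⬝ᵥ a) * p a) μ) :
    Integrable (fun a => (a ⬝ᵥ (A *ᵥ a)) * p a) μ := by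
  refine (h2.const_mul (∑ i, ∑ j, |A i j|)).mono ?_ (ae_of_all _ fun a => ?_)
  · exact ((by fun_prop : Continuous fun a : n → ℝ => a ⬝ᵥ (A *ᵥ a)).aemeasurable.mul
      hp).aestronglyMeasurable
  · have hC : 0 ≤ ∑ i, ∑ j, |A i j| := by positivity
    simp only [norm_mul, Real.norm_eq_abs, abs_of_nonneg hC,
      abs_of_nonneg (dotProduct_self_nonneg a), ← mul_assoc]
    exact mul_le_mul_of_nonneg_right (abs_dotProduct_mulVec_self_le A a) (abs_nonneg _)

theorem integrable_dotProduct_mul (η : n → ℝ) (hp : AEMeasurable p μ) (h1 : Integrable p μ)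
    (h2 : Integrable (fun a => (a ⬝ᵥ a) * p a) μ) :
    Integrable (fun a => (a ⬝ᵥ η) * p a) μ := by
  refine ((h2.add (h1.const_mul (η ⬝ᵥ η))).div_const 2).mono ?_ (ae_of_all _ fun a => ?_)
  · exact ((by fun_prop : Continuous fun a : n → ℝ => a ⬝ᵥ η).aemeasurable.mul
      hp).aestronglyMeasurable
  · have hbound := two_mul_abs_dotProduct_le a η
    have hsum : 0 ≤ a ⬝ᵥ a + η ⬝ᵥ η := by
      linarith [dotProduct_self_nonneg a, dotProduct_self_nonneg η]
    simp only [Pi.add_apply, ← add_mul, norm_div, norm_mul, Real.norm_eq_abs, abs_of_nonneg hsum,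
      abs_two]
    rw [le_div_iff₀ two_pos]
    nlinarith [abs_nonneg (p a)]

theorem integrable_quadratic_add_log_mul (A : Matrix n n ℝ) (η : n → ℝ) (c : ℝ)
    (hp : AEMeasurable p μ) (h1 : Integrable p μ) (h2 : Integrable (fun a => (a ⬝ᵥ a) * p a) μ)
    (hent : Integrable (fun a => p a * |Real.log (p a)|) μ) :
    Integrable (fun a => (a ⬝ᵥ (A *ᵥ a) + 2 * (a ⬝ᵥ η) + c * Real.log (p a)) * p a) μ := by
  refine (((integrable_dotProduct_mulVec_self_mul A hp h2).add
    ((integrable_dotProduct_mul η hp h1 h2).const_mul 2)).add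
    ((hent.mul_log_of_mul_abs_log hp).const_mul c)).congr (ae_of_all _ fun a => ?_)
  simp only [Pi.add_apply]
  ring

end Integrability

section Gaussian

variable {m : ℕ} {S : Matrix (Fin m) (Fin m) ℝ} {lam : ℝ}

theorem gaussDensity_pos (hS : 0 < S.det) (hlam : 0 < lam) (v a : Fin m → ℝ) :
    0 < gaussDensity S lam v a := by
  unfold gaussDensity
  positivity

theorem log_gaussDensity (hS : 0 < S.det) (hlam : 0 < lam) (v a : Fin m → ℝ) :
    Real.log (gaussDensity S lam v a)
      = (Real.log S.det - m * Real.log (Real.pi * lam)) / 2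
        - (1 / lam) * ((a + v) ⬝ᵥ (S *ᵥ (a + v))) := by
  unfold gaussDensity
  rw [Real.log_mul (by positivity) (Real.exp_ne_zero _), Real.log_mul (by positivity)
    (by positivity), Real.log_exp, Real.log_sqrt hS.le, Real.log_rpow (by positivity)]
  ring

theorem mul_log_gaussDensity_inv_mulVec (hS : S.PosDef) (hlam : 0 < lam) (η a : Fin m → ℝ) :
    lam * Real.log (gaussDensity S lam (S⁻¹ *ᵥ η) a)
      = -(a ⬝ᵥ (S *ᵥ a) + 2 * (a ⬝ᵥ η)) - η ⬝ᵥ (S⁻¹ *ᵥ η)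
        - lam / 2 * (m * Real.log (Real.pi * lam) - Real.log S.det) := by
  have hSv : S *ᵥ (S⁻¹ *ᵥ η) = η := by
    rw [mulVec_mulVec, mul_nonsing_inv S (isUnit_iff_ne_zero.mpr hS.det_pos.ne'), one_mulVec]
  rw [log_gaussDensity hS.det_pos hlam,
    add_dotProduct_mulVec_add_of_isSymm (isHermitian_iff_isSymm.mp hS.isHermitian), hSv,
    dotProduct_comm (S⁻¹ *ᵥ η) η]
  field_simp
  ring

end Gaussian

/-- `Real.log 0 = 0` realizes the conventions `0 · log 0 = 0` and `p log(p/g) = 0` where `p = 0`. -/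
theorem entropy_regularized_KL_identity_general
    (m : ℕ)
    (S : Matrix (Fin m) (Fin m) ℝ) (hS : S.PosDef)
    (lam : ℝ) (hlam : 0 < lam)
    (η : Fin m → ℝ)
    (p : (Fin m → ℝ) → ℝ) (hp_meas : Measurable p)
    (hp_prob : ∫ a : Fin m → ℝ, p a = 1)
    (hp_int : Integrable p)
    (hp_mom2 : Integrable (fun a : Fin m → ℝ => (a ⬝ᵥ a) * p a))
    (hp_ent : Integrable (fun a : Fin m → ℝ => p a * |Real.log (p a)|)) :
    ∫ a : Fin m → ℝ,
        (a ⬝ᵥ (S *ᵥ a) + 2 * (a ⬝ᵥ η) + lam * Real.log (p a)) * p a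
      = -(η ⬝ᵥ (S⁻¹ *ᵥ η))
        - (lam / 2) * ((m : ℝ) * Real.log (Real.pi * lam) - Real.log S.det)
        + lam * ∫ a : Fin m → ℝ,
            p a * Real.log (p a / gaussDensity S lam (S⁻¹ *ᵥ η) a) := by
  set K := -(η ⬝ᵥ (S⁻¹ *ᵥ η))
    - (lam / 2) * ((m : ℝ) * Real.log (Real.pi * lam) - Real.log S.det)
  have hF := integrable_quadratic_add_log_mul S η lam hp_meas.aemeasurable hp_int hp_mom2 hp_ent
  have hKL : ∀ a, lam * (p a * Real.log (p a / gaussDensity S lam (S⁻¹ *ᵥ η) a))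
      = (a ⬝ᵥ (S *ᵥ a) + 2 * (a ⬝ᵥ η) + lam * Real.log (p a)) * p a - K * p a := by
    intro a
    rcases eq_or_ne (p a) 0 with hpa | hpa
    · simp [hpa]
    · rw [Real.log_div hpa (gaussDensity_pos hS.det_pos hlam _ a).ne']
      linear_combination (-p a) * mul_log_gaussDensity_inv_mulVec hS hlam η a
  rw [← integral_const_mul, funext hKL, integral_sub hF (hp_int.const_mul K), integral_const_mul,
    hp_prob]
  ring

/-- Kullback–Leibler identity for the entropy-regularized quadratic functional:
`∫ (aᵀSa + 2aᵀη + λ log p(a)) p(a) da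
 = −ηᵀS⁻¹η − (λ/2)(m log(πλ) − log det S) + λ ∫ p log(p/g)`
where `g = g_{S,λ,S⁻¹η}`. (Here `Real.log 0 = 0`, realizing the convention
`0·log 0 = 0` and `p log(p/g) = 0` where `p = 0`.) -/
theorem entropy_regularized_KL_identity
    (m : ℕ) (hm : 0 < m)
    (S : Matrix (Fin m) (Fin m) ℝ) (hS : S.PosDef)
    (lam : ℝ) (hlam : 0 < lam)
    (η : Fin m → ℝ)
    (p : (Fin m → ℝ) → ℝ) (hp_meas : Measurable p) (hp_nonneg : ∀ a, 0 ≤ p a)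
    (hp_prob : ∫ a : Fin m → ℝ, p a = 1)
    (hp_int : Integrable p)
    (hp_mom2 : Integrable (fun a : Fin m → ℝ => (a ⬝ᵥ a) * p a))
    (hp_ent : Integrable (fun a : Fin m → ℝ => p a * |Real.log (p a)|)) :
    ∫ a : Fin m → ℝ,
        (a ⬝ᵥ (S *ᵥ a) + 2 * (a ⬝ᵥ η) + lam * Real.log (p a)) * p a
      = -(η ⬝ᵥ (S⁻¹ *ᵥ η))
        - (lam / 2) * ((m : ℝ) * Real.log (Real.pi * lam) - Real.log S.det)
        + lam * ∫ a : Fin m → ℝ,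
            p a * Real.log (p a / gaussDensity S lam (S⁻¹ *ᵥ η) a) :=
  entropy_regularized_KL_identity_general m S hS lam hlam η p hp_meas hp_prob hp_int hp_mom2 hp_ent
end
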